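/- Let p₁, …, p_n be distinct points in the open disc D(0, 1/2) ⊂ ℂ and write p = (p₁, …, p_n). Then there exists ρ > 0 such that for each q = (q₁, …, q_n) with q_j ∈ D(p_j, ρ) for all j, there is a map ψ_q : 𝔻 → ℂ that is holomorphic and injective on the open unit disc 𝔻, such that: (1) ψ_q(q_j) = p_j for 1 ≤ j ≤ n; (2) ψ_p(z) = z for all z ∈ 𝔻; and (3) ψ_q depends continuously on q, i.e. the map (q, z) ↦ ψ_q(z) is continuous on (∏ⱼ D(p_j, ρ)) × 𝔻. -/

import Mathlib

open Set Metric

/-!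
Take `ψ_q = id + P_q`, where `P_q` is the Lagrange polynomial with `P_q(q_j) = p_j - q_j`. Then
`ψ_q(q_j) = p_j` and `ψ_p = id`, and the explicit Lagrange formula is continuous in `(q, z)` as
long as the nodes `q_j` stay distinct. If the `p_j` are `δ`-separated and `|q_j - p_j| < ρ ≤ δ/4`,
the nodes are `δ/2`-separated, so on the disc of radius 2 the Lagrange formula gives
`|P_q| ≤ ρ · n (6/δ)^(n-1)`. By Cauchy's estimate this also bounds `|P_q'|` on the unit disc,
so for small `ρ` the perturbation `P_q` is a contraction there and `ψ_q` is injective.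
-/

open Finset in
lemma exists_pos_le_dist_of_injective {ι X : Type*} [Finite ι] [MetricSpace X] {p : ι → X}
    (hp : Function.Injective p) : ∃ δ > 0, ∀ i j, i ≠ j → δ ≤ dist (p i) (p j) := by
  have := Fintype.ofFinite ι
  classical
  rcases (univ : Finset ι).offDiag.eq_empty_or_nonempty with hempty | hne
  · refine ⟨1, one_pos, fun i j hij => ?_⟩
    have : (i, j) ∈ (univ : Finset ι).offDiag := by simp [hij]
    simp [hempty] at this
  · obtain ⟨x, hx, hmin⟩ := (univ : Finset ι).offDiag.exists_min_image
      (fun x => dist (p x.1) (p x.2)) hne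
    refine ⟨_, dist_pos.2 (hp.ne (mem_offDiag.1 hx).2.2), fun i j hij => hmin (i, j) ?_⟩
    simp [hij]

lemma injective_of_pos_le_dist {ι X : Type*} [PseudoMetricSpace X] {q : ι → X} {c : ℝ}
    (hc : 0 < c) (hsep : ∀ i j, i ≠ j → c ≤ dist (q i) (q j)) : Function.Injective q :=
  fun i j hqij => by_contra fun hij => (hsep i j hij).not_gt (by rw [hqij, dist_self]; exact hc)

lemma half_le_dist_of_forall_dist_lt {ι X : Type*} [PseudoMetricSpace X] {p q : ι → X} {δ : ℝ}
    (hsep : ∀ i j, i ≠ j → δ ≤ dist (p i) (p j)) (hq : ∀ j, dist (q j) (p j) < δ / 4)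
    {i j : ι} (hij : i ≠ j) : δ / 2 ≤ dist (q i) (q j) := by
  have := dist_triangle4 (p i) (q i) (q j) (p j)
  rw [dist_comm (p i) (q i)] at this
  linarith [hsep i j hij, hq i, hq j]

lemma injOn_add_of_norm_sub_le {E : Type*} [NormedAddCommGroup E] {g : E → E} {s : Set E}
    {K : ℝ} (hK : K < 1) (hg : ∀ z ∈ s, ∀ w ∈ s, ‖g z - g w‖ ≤ K * ‖z - w‖) :
    InjOn (fun z => z + g z) s := by
  intro z hz w hw h
  have hzw : z - w = g w - g z := by rw [sub_eq_sub_iff_add_eq_add, add_comm (g w)]; exact h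
  have := hg w hw z hz
  rw [← hzw, norm_sub_rev w] at this
  rw [← sub_eq_zero, ← norm_le_zero_iff]
  nlinarith [norm_nonneg (z - w)]

lemma norm_sub_le_of_forall_norm_le {E : Type*} [NormedAddCommGroup E] [NormedSpace ℂ E]
    {f : ℂ → E} {c z w : ℂ} {r R M : ℝ} (hR : 0 < R) (hf : DifferentiableOn ℂ f (ball c (r + R)))
    (hM : ∀ u ∈ ball c (r + R), ‖f u‖ ≤ M) (hz : z ∈ ball c r) (hw : w ∈ ball c r) :
    ‖f z - f w‖ ≤ M / R * ‖z - w‖ := by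
  have hsub : ∀ x ∈ ball c r, closedBall x R ⊆ ball c (r + R) := fun x hx =>
    closedBall_subset_ball' (by rw [mem_ball] at hx; linarith)
  have hdiff : ∀ x ∈ ball c r, DifferentiableAt ℂ f x := fun x hx =>
    hf.differentiableAt (isOpen_ball.mem_nhds (mem_closedBall_self hR.le |> hsub x hx))
  have hderiv : ∀ x ∈ ball c r, ‖deriv f x‖ ≤ M / R := fun x hx =>
    Complex.norm_deriv_le_of_forall_mem_sphere_norm_le hR
      (hf.mono ((closure_ball x hR.ne').subset.trans (hsub x hx))).diffContOnCl
      fun u hu => hM u (hsub x hx (sphere_subset_closedBall hu))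
  exact (convex_ball c r).norm_image_sub_le_of_norm_deriv_le hdiff hderiv hw hz

namespace Lagrange

open Finset Polynomial

variable {F ι : Type*} [Field F] [DecidableEq ι]

lemma eval_interpolate (s : Finset ι) (v r : ι → F) (z : F) :
    (interpolate s v r).eval z = ∑ i ∈ s, r i * ∏ j ∈ s.erase i, (z - v j) / (v i - v j) := by
  simp only [interpolate_apply, eval_finsetSum, eval_mul, eval_C, Lagrange.basis, eval_prod,
    basisDivisor, eval_sub, eval_X, div_eq_inv_mul]

lemma norm_eval_interpolate_le {s : Finset ι} {v r : ι → ℂ} {z : ℂ} {c R ε : ℝ} (hc : 0 < c)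
    (hsep : ∀ i ∈ s, ∀ j ∈ s, i ≠ j → c ≤ ‖v i - v j‖) (hz : ∀ j ∈ s, ‖z - v j‖ ≤ R)
    (hr : ∀ i ∈ s, ‖r i‖ ≤ ε) :
    ‖(interpolate s v r).eval z‖ ≤ ε * (#s * (R / c) ^ (#s - 1)) := by
  rw [eval_interpolate]
  calc ‖∑ i ∈ s, r i * ∏ j ∈ s.erase i, (z - v j) / (v i - v j)‖
      ≤ ∑ i ∈ s, ‖r i * ∏ j ∈ s.erase i, (z - v j) / (v i - v j)‖ := norm_sum_le _ _
    _ ≤ ∑ _i ∈ s, ε * (R / c) ^ (#s - 1) := sum_le_sum fun i hi => ?_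
    _ = ε * (#s * (R / c) ^ (#s - 1)) := by rw [sum_const, nsmul_eq_mul]; ring
  have hR : 0 ≤ R := (norm_nonneg _).trans (hz i hi)
  have hfactor : ∀ j ∈ s.erase i, ‖(z - v j) / (v i - v j)‖ ≤ R / c := fun j hj => by
    rw [norm_div]
    exact div_le_div₀ hR (hz j (mem_of_mem_erase hj)) hc
      (hsep i hi j (mem_of_mem_erase hj) (ne_of_mem_erase hj).symm)
  rw [norm_mul, norm_prod, ← card_erase_of_mem hi, ← prod_const]
  exact mul_le_mul (hr i hi) (prod_le_prod (fun _ _ => norm_nonneg _) hfactor)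
    (prod_nonneg fun _ _ => norm_nonneg _) ((norm_nonneg _).trans (hr i hi))

end Lagrange

section RoydenMap

open Finset Polynomial

variable {ι : Type*} [Fintype ι] [DecidableEq ι]

noncomputable def roydenMap (p q : ι → ℂ) (z : ℂ) : ℂ :=
  z + (Lagrange.interpolate univ q (p - q)).eval z

lemma roydenMap_apply_node (p : ι → ℂ) {q : ι → ℂ} (hq : Function.Injective q) (j : ι) :
    roydenMap p q (q j) = p j := by
  rw [roydenMap, Lagrange.eval_interpolate_at_node _ hq.injOn (mem_univ j), Pi.sub_apply,
    add_sub_cancel]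

lemma roydenMap_self (p : ι → ℂ) : roydenMap p p = id := by
  funext z
  simp [roydenMap]

lemma differentiable_roydenMap (p q : ι → ℂ) : Differentiable ℂ (roydenMap p q) :=
  differentiable_id.add (Polynomial.differentiable _)

lemma continuousOn_roydenMap (p : ι → ℂ) :
    ContinuousOn (fun x : (ι → ℂ) × ℂ => roydenMap p x.1 x.2) {x | Function.Injective x.1} := by
  simp only [roydenMap, Lagrange.eval_interpolate, Pi.sub_apply]
  refine continuousOn_snd.add (continuousOn_finsetSum _ fun i _ => ?_)
  refine ContinuousOn.mul (by fun_prop) (continuousOn_finsetProd _ fun j hj => ?_)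
  exact ContinuousOn.div (by fun_prop) (by fun_prop)
    fun x hx => sub_ne_zero.2 (hx.ne (ne_of_mem_erase hj).symm)

lemma injOn_roydenMap {p q : ι → ℂ} {c ρ : ℝ} (hc : 0 < c)
    (hsep : ∀ i j, i ≠ j → c ≤ dist (q i) (q j)) (hq : ∀ j, ‖q j‖ ≤ 1)
    (hpq : ∀ j, dist (q j) (p j) ≤ ρ)
    (hρ : ρ * (Fintype.card ι * (3 / c) ^ (Fintype.card ι - 1)) < 1) :
    InjOn (roydenMap p q) (ball 0 1) := by
  have hbound : ∀ u ∈ ball (0 : ℂ) (1 + 1), ‖(Lagrange.interpolate univ q (p - q)).eval u‖ ≤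
      ρ * (Fintype.card ι * (3 / c) ^ (Fintype.card ι - 1)) := fun u hu => by
    refine Lagrange.norm_eval_interpolate_le hc
      (fun i _ j _ hij => dist_eq_norm (q i) (q j) ▸ hsep i j hij) (fun j _ => ?_)
      (fun i _ => by rw [Pi.sub_apply, ← dist_eq_norm, dist_comm]; exact hpq i)
    rw [mem_ball_zero_iff] at hu
    linarith [norm_sub_le u (q j), hq j]
  exact injOn_add_of_norm_sub_le (by rwa [div_one]) fun z hz w hw =>
    norm_sub_le_of_forall_norm_le one_pos (Polynomial.differentiable _).differentiableOn hbound
      hz hw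

end RoydenMap

/-- Royden's lemma: given distinct points `p₁, …, pₙ` in the disc `D(0, 1/2)`, there
is a `ρ > 0` such that for every `q` with `qⱼ ∈ D(pⱼ, ρ)` there is a holomorphic
injection `ψ_q` of the unit disc with `ψ_q(qⱼ) = pⱼ`, `ψ_p = id`, and `ψ_q(z)`
depending continuously on `(q, z)`. -/
theorem royden_interpolation
    (n : ℕ) (p : Fin n → ℂ) (hinj : Function.Injective p)
    (hp : ∀ j, p j ∈ Metric.ball (0 : ℂ) (1 / 2)) :
    ∃ ρ > 0, (∀ j, Metric.ball (p j) ρ ⊆ Metric.ball (0 : ℂ) 1) ∧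
      ∃ Ψ : (Fin n → ℂ) → ℂ → ℂ,
        (∀ q : Fin n → ℂ, (∀ j, q j ∈ Metric.ball (p j) ρ) →
          DifferentiableOn ℂ (Ψ q) (Metric.ball (0 : ℂ) 1) ∧
          Set.InjOn (Ψ q) (Metric.ball (0 : ℂ) 1) ∧
          ∀ j, Ψ q (q j) = p j) ∧
        (∀ z ∈ Metric.ball (0 : ℂ) 1, Ψ p z = z) ∧
        ContinuousOn (fun x : (Fin n → ℂ) × ℂ => Ψ x.1 x.2)
          ({q : Fin n → ℂ | ∀ j, q j ∈ Metric.ball (p j) ρ} ×ˢ Metric.ball (0 : ℂ) 1) := by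
  obtain ⟨δ, hδ, hsep⟩ := exists_pos_le_dist_of_injective hinj
  set A : ℝ := Fintype.card (Fin n) * (3 / (δ / 2)) ^ (Fintype.card (Fin n) - 1)
  set ρ : ℝ := min (min (δ / 4) (1 / 2)) (1 / (A + 1))
  have hρ : 0 < ρ := by positivity
  obtain ⟨hρδ, hρ2⟩ : ρ ≤ δ / 4 ∧ ρ ≤ 1 / 2 := le_min_iff.1 (min_le_left _ _)
  have hρA : ρ * A < 1 := by
    have : ρ ≤ 1 / (A + 1) := min_le_right _ _
    rw [le_div_iff₀ (by positivity)] at this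
    linarith
  have hball (j : Fin n) : ball (p j) ρ ⊆ ball 0 1 :=
    ball_subset_ball' (by linarith [mem_ball.1 (hp j)])
  have hqsep (q : Fin n → ℂ) (hq : ∀ j, q j ∈ ball (p j) ρ) (i j : Fin n) (hij : i ≠ j) :
      δ / 2 ≤ dist (q i) (q j) :=
    half_le_dist_of_forall_dist_lt hsep (fun k => (hq k).trans_le hρδ) hij
  have hqinj (q : Fin n → ℂ) (hq : ∀ j, q j ∈ ball (p j) ρ) : Function.Injective q :=
    injective_of_pos_le_dist (half_pos hδ) (hqsep q hq)
  refine ⟨ρ, hρ, hball, roydenMap p, fun q hq => ⟨?_, ?_, roydenMap_apply_node p (hqinj q hq)⟩,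
    fun z _ => by rw [roydenMap_self, id], ?_⟩
  · exact (differentiable_roydenMap p q).differentiableOn
  · exact injOn_roydenMap (half_pos hδ) (hqsep q hq)
      (fun j => (mem_ball_zero_iff.1 (hball j (hq j))).le) (fun j => (hq j).le) hρA
  · exact (continuousOn_roydenMap p).mono fun x hx => hqinj x.1 hx.1
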